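/- Let α = ∑_{n=1}^{∞} 2^{−n²}. Then α is irrational and for every n ∈ ℕ the fractional part of 2^n·α lies in [0, 3/4); in particular the sequence (2^n·α mod 1)_{n∈ℕ} is not dense in ℝ/ℤ. -/

import Mathlib

/-!
Write `α = ∑_{k ≥ 1} 2^{-k²}`. If `m² ≤ n < (m + 1)²`, the terms of `2ⁿ α` with `k ≤ m` are
integers and the others add up to at most `(4/3) 2^{n - (m + 1)²} ≤ 2/3`. Hence every fractional
part of `2ⁿ α` lies in `(0, 2/3]`, which keeps the orbit away from `5/6` in `ℝ/ℤ`. At `n = m²` the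
fractional part is positive but below `4^{-m}`; for `α = p / d` it would be a positive multiple
of `1 / d`, which fails once `4^m > d`.
-/

open Set

lemma inv_two_pow_sq_le_geometric (m i : ℕ) :
    ((2 : ℝ) ^ ((i + m + 1) ^ 2))⁻¹ ≤ ((2 : ℝ) ^ ((m + 1) ^ 2))⁻¹ * (1 / 4) ^ i := by
  have hexp : (m + 1) ^ 2 + 2 * i ≤ (i + m + 1) ^ 2 := by ring_nf; nlinarith
  calc ((2 : ℝ) ^ ((i + m + 1) ^ 2))⁻¹
      ≤ ((2 : ℝ) ^ ((m + 1) ^ 2 + 2 * i))⁻¹ :=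
        inv_anti₀ (by positivity) (pow_le_pow_right₀ one_le_two hexp)
    _ = ((2 : ℝ) ^ ((m + 1) ^ 2))⁻¹ * (1 / 4) ^ i := by
        rw [pow_add, pow_mul, mul_inv, one_div, inv_pow]; norm_num

lemma summable_inv_two_pow_sq : Summable fun k : ℕ => ((2 : ℝ) ^ ((k + 1) ^ 2))⁻¹ :=
  ((summable_geometric_of_lt_one (by norm_num) (by norm_num)).mul_left _).of_nonneg_of_le
    (fun _ => by positivity) fun k => inv_two_pow_sq_le_geometric 0 k

lemma tsum_inv_two_pow_sq_tail_pos (m : ℕ) :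
    0 < ∑' i : ℕ, ((2 : ℝ) ^ ((i + m + 1) ^ 2))⁻¹ :=
  ((summable_nat_add_iff m).2 summable_inv_two_pow_sq).tsum_pos (fun _ => by positivity) 0
    (by positivity)

lemma tsum_inv_two_pow_sq_tail_le (m : ℕ) :
    ∑' i : ℕ, ((2 : ℝ) ^ ((i + m + 1) ^ 2))⁻¹ ≤ 4 / 3 * ((2 : ℝ) ^ ((m + 1) ^ 2))⁻¹ := by
  have hgeom : Summable fun i : ℕ => ((2 : ℝ) ^ ((m + 1) ^ 2))⁻¹ * (1 / 4) ^ i :=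
    (summable_geometric_of_lt_one (by norm_num) (by norm_num)).mul_left _
  calc ∑' i : ℕ, ((2 : ℝ) ^ ((i + m + 1) ^ 2))⁻¹
      ≤ ∑' i : ℕ, ((2 : ℝ) ^ ((m + 1) ^ 2))⁻¹ * (1 / 4) ^ i :=
        ((summable_nat_add_iff m).2 summable_inv_two_pow_sq).tsum_le_tsum
          (inv_two_pow_sq_le_geometric m) hgeom
    _ = 4 / 3 * ((2 : ℝ) ^ ((m + 1) ^ 2))⁻¹ := by
        rw [tsum_mul_left, tsum_geometric_of_lt_one (by norm_num) (by norm_num)]; ring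

lemma two_pow_mul_tsum_inv_two_pow_sq_tail_le {m n : ℕ} (hn : n < (m + 1) ^ 2) :
    (2 : ℝ) ^ n * ∑' i : ℕ, ((2 : ℝ) ^ ((i + m + 1) ^ 2))⁻¹ ≤ 2 / 3 := by
  have hpow : (2 : ℝ) ^ n * 2 ≤ 2 ^ ((m + 1) ^ 2) := by
    rw [← pow_succ]; exact pow_le_pow_right₀ one_le_two hn
  calc (2 : ℝ) ^ n * ∑' i : ℕ, ((2 : ℝ) ^ ((i + m + 1) ^ 2))⁻¹
      ≤ 2 ^ n * (4 / 3 * ((2 : ℝ) ^ ((m + 1) ^ 2))⁻¹) :=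
        mul_le_mul_of_nonneg_left (tsum_inv_two_pow_sq_tail_le m) (by positivity)
    _ = 2 / 3 * (2 ^ n * 2 / 2 ^ ((m + 1) ^ 2)) := by ring
    _ ≤ 2 / 3 := mul_le_of_le_one_right (by norm_num) ((div_le_one (by positivity)).2 hpow)

lemma fract_two_pow_mul_tsum_inv_two_pow_sq {m n : ℕ} (hm : m ^ 2 ≤ n) (hn : n < (m + 1) ^ 2) :
    Int.fract ((2 : ℝ) ^ n * ∑' k : ℕ, ((2 : ℝ) ^ ((k + 1) ^ 2))⁻¹) =
      (2 : ℝ) ^ n * ∑' i : ℕ, ((2 : ℝ) ^ ((i + m + 1) ^ 2))⁻¹ := by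
  have hhead : (2 : ℝ) ^ n * ∑ k ∈ Finset.range m, ((2 : ℝ) ^ ((k + 1) ^ 2))⁻¹ =
      ((∑ k ∈ Finset.range m, 2 ^ (n - (k + 1) ^ 2) : ℕ) : ℝ) := by
    push_cast
    rw [Finset.mul_sum]
    refine Finset.sum_congr rfl fun k hk => ?_
    have hk : (k + 1) ^ 2 ≤ n :=
      (Nat.pow_le_pow_left (Finset.mem_range.mp hk) 2).trans hm
    rw [pow_sub₀ _ two_ne_zero hk]
  rw [← summable_inv_two_pow_sq.sum_add_tsum_nat_add m, mul_add, hhead, Int.fract_natCast_add,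
    Int.fract_eq_self]
  exact ⟨by have := tsum_inv_two_pow_sq_tail_pos m; positivity,
    (two_pow_mul_tsum_inv_two_pow_sq_tail_le hn).trans_lt (by norm_num)⟩

lemma fract_two_pow_mul_tsum_inv_two_pow_sq_le_two_thirds (n : ℕ) :
    Int.fract ((2 : ℝ) ^ n * ∑' k : ℕ, ((2 : ℝ) ^ ((k + 1) ^ 2))⁻¹) ≤ 2 / 3 := by
  rw [fract_two_pow_mul_tsum_inv_two_pow_sq (Nat.sqrt_le' n) (Nat.lt_succ_sqrt' n)]
  exact two_pow_mul_tsum_inv_two_pow_sq_tail_le (Nat.lt_succ_sqrt' n)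

lemma fract_two_pow_sq_mul_tsum_inv_two_pow_sq_mem (m : ℕ) :
    Int.fract ((2 : ℝ) ^ (m ^ 2) * ∑' k : ℕ, ((2 : ℝ) ^ ((k + 1) ^ 2))⁻¹) ∈
      Ioc 0 (2 / 3 * (4 ^ m)⁻¹) := by
  rw [fract_two_pow_mul_tsum_inv_two_pow_sq le_rfl
    (Nat.pow_lt_pow_left (Nat.lt_succ_self m) two_ne_zero)]
  refine ⟨by have := tsum_inv_two_pow_sq_tail_pos m; positivity, ?_⟩
  calc (2 : ℝ) ^ (m ^ 2) * ∑' i : ℕ, ((2 : ℝ) ^ ((i + m + 1) ^ 2))⁻¹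
      ≤ 2 ^ (m ^ 2) * (4 / 3 * ((2 : ℝ) ^ ((m + 1) ^ 2))⁻¹) :=
        mul_le_mul_of_nonneg_left (tsum_inv_two_pow_sq_tail_le m) (by positivity)
    _ = 2 / 3 * (4 ^ m)⁻¹ := by
        rw [show (m + 1) ^ 2 = m ^ 2 + 2 * m + 1 by ring, pow_add, pow_add, pow_mul]
        field_simp; norm_num

-- For `x = p / d`, the number `d * fract (N * x)` is an integer.
lemma irrational_of_forall_exists_fract_pos {x : ℝ}
    (h : ∀ d : ℕ, 0 < d → ∃ N : ℤ, 0 < Int.fract (N * x) ∧ d * Int.fract (N * x) < 1) :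
    Irrational x := by
  rintro ⟨q, rfl⟩
  obtain ⟨N, hpos, hlt⟩ := h q.den q.pos
  set k : ℤ := N * q.num - q.den * ⌊(N : ℝ) * q⌋
  have hk : (q.den : ℝ) * Int.fract ((N : ℝ) * q) = k := by
    have hq : (q.den : ℝ) * q = q.num := by exact_mod_cast Rat.den_mul_eq_num q
    rw [Int.fract]; push_cast [k]; linear_combination (N : ℝ) * hq
  have hk0 : (0 : ℝ) < k := hk ▸ mul_pos (by exact_mod_cast q.pos) hpos
  have hk1 : (k : ℝ) < 1 := hk ▸ hlt
  norm_cast at hk0 hk1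
  omega

lemma not_dense_range_coe_addCircle_of_fract_le {ι : Type*} (x : ι → ℝ) {b : ℝ} (hb : b < 1)
    (h : ∀ i, Int.fract (x i) ≤ b) :
    ¬ Dense (range fun i => (x i : AddCircle (1 : ℝ))) := by
  have hsub : range (fun i => (x i : AddCircle (1 : ℝ))) ⊆ (↑) '' Icc 0 b := by
    rintro _ ⟨i, rfl⟩
    exact ⟨Int.fract (x i), ⟨Int.fract_nonneg _, h i⟩, AddCircle.coe_fract _⟩
  have hclosed : IsClosed ((↑) '' Icc 0 b : Set (AddCircle (1 : ℝ))) :=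
    (isCompact_Icc.image (AddCircle.continuous_mk' 1)).isClosed
  intro hdense
  obtain ⟨y, ⟨hy0, hyb⟩, hy⟩ :
      (((1 + b) / 2 : ℝ) : AddCircle (1 : ℝ)) ∈ ((↑) '' Icc 0 b : Set (AddCircle (1 : ℝ))) :=
    hclosed.closure_subset_iff.2 hsub (hdense _)
  rw [AddCircle.coe_eq_coe_iff_of_mem_Ico (a := 0) ⟨hy0, by linarith⟩
    ⟨by linarith, by linarith⟩] at hy
  linarith

theorem two_pow_orbit_not_dense (α : ℝ)
    (hα : α = ∑' n : ℕ, ((2 : ℝ) ^ ((n + 1) ^ 2))⁻¹) :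
    Irrational α ∧
    (∀ n : ℕ, Int.fract ((2 : ℝ) ^ n * α) ∈ Set.Ico (0 : ℝ) (3 / 4)) ∧
    ¬ Dense (Set.range fun n : ℕ => (((2 : ℝ) ^ n * α : ℝ) : AddCircle (1 : ℝ))) := by
  subst hα
  refine ⟨irrational_of_forall_exists_fract_pos fun d _ => ⟨2 ^ d ^ 2, ?_⟩,
    fun n => ⟨Int.fract_nonneg _,
      (fract_two_pow_mul_tsum_inv_two_pow_sq_le_two_thirds n).trans_lt (by norm_num)⟩,
    not_dense_range_coe_addCircle_of_fract_le _ (by norm_num)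
      fract_two_pow_mul_tsum_inv_two_pow_sq_le_two_thirds⟩
  obtain ⟨hpos, hle⟩ := fract_two_pow_sq_mul_tsum_inv_two_pow_sq_mem d
  push_cast
  refine ⟨hpos, ?_⟩
  have hd : (d : ℝ) < 4 ^ d := by exact_mod_cast Nat.lt_pow_self (by norm_num)
  calc (d : ℝ) * _ ≤ d * (2 / 3 * (4 ^ d)⁻¹) := by gcongr
    _ < 4 ^ d * (4 ^ d)⁻¹ := by nlinarith
    _ = 1 := mul_inv_cancel₀ (by positivity)
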